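/- arXiv:2011.09834 — 13 statements merged into one kernel-verified Lean document; each statement's English description precedes it below -/
import Mathlib

section
/- Let P be a property of multiteams over a type α that is invariant under multiplication of multiplicities (for every multiteam M and every natural number k > 0, P holds of M if and only if P holds of k•M) and downwards closed (whenever P holds of M and N ≤ M in the submultiset order, P holds of N). Then P depends only on the supporting team: for all multiteams M and N with M.toFinset = N.toFinset, P holds of M if and only if P holds of N. -/
/-- A property of multiteams that is invariant under multiplication of multiplicities
and downwards closed depends only on the supporting team. -/
theorem multiteam_downwards_closed_depends_only_on_team
    {α : Type*} [DecidableEq α] (P : Multiset α → Prop)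
    (hmul : ∀ (M : Multiset α) (k : ℕ), 0 < k → (P M ↔ P (k • M)))
    (hdown : ∀ M N : Multiset α, P M → N ≤ M → P N) :
    ∀ M N : Multiset α, M.toFinset = N.toFinset → (P M ↔ P N) := by
  have key : ∀ M N : Multiset α, M.toFinset = N.toFinset → P M → P N := by
    intro M N h hPM
    have hk : (0:ℕ) < N.card + 1 := Nat.succ_pos _
    have hle : N ≤ (N.card + 1) • M := by
      refine Multiset.le_iff_count.2 fun a => ?_
      rw [Multiset.count_nsmul]
      by_cases ha : a ∈ N
      · have haM : a ∈ M := by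
          rw [← Multiset.mem_toFinset, h, Multiset.mem_toFinset]; exact ha
        have h1 : 1 ≤ M.count a := Multiset.one_le_count_iff_mem.2 haM
        calc N.count a ≤ N.card := Multiset.count_le_card a N
          _ ≤ N.card + 1 := Nat.le_succ _
          _ = (N.card + 1) * 1 := (mul_one _).symm
          _ ≤ (N.card + 1) * M.count a := Nat.mul_le_mul_left _ h1
      · simp [Multiset.count_eq_zero_of_notMem ha]
    exact hdown _ _ ((hmul M _ hk).1 hPM) hle
  exact fun M N h => ⟨key M N h, key N M h.symm⟩
end

section
/- Multiteam inclusion with a common prefix is equivalent to conditional inclusion: for every multiteam M over α and functions v : α → δ and f, g : α → β, one has Multiset.map (fun s => (v s, f s)) M ≤ Multiset.map (fun s => (v s, g s)) M if and only if for every a : δ, Multiset.map f (M.filter (fun s => v s = a)) ≤ Multiset.map g (M.filter (fun s => v s = a)). -/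
/-- Multiteam inclusion with a common prefix is equivalent to conditional inclusion. -/
theorem multiteam_inclusion_common_prefix
    {α β δ : Type*} [DecidableEq δ] (M : Multiset α) (v : α → δ) (f g : α → β) :
    Multiset.map (fun s => (v s, f s)) M ≤ Multiset.map (fun s => (v s, g s)) M ↔
      ∀ a : δ, Multiset.map f (M.filter (fun s => v s = a)) ≤
        Multiset.map g (M.filter (fun s => v s = a)) := by
  classical
  simp only [Multiset.le_iff_count, Multiset.count_map, Multiset.filter_filter, Prod.forall,
    Prod.mk.injEq]
  constructor
  · intro h a b
    have := h a b
    convert this using 2 <;> ext s <;>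
      simp only [Multiset.count_filter] <;> split_ifs <;> tauto
  · intro h a b
    have := h a b
    convert this using 2 <;> ext s <;>
      simp only [Multiset.count_filter] <;> split_ifs <;> tauto
end

section
/- Multiteam inclusion cancels over additive unions: for all multiteams M, N over α and functions f, g : α → β, if Multiset.map f M ≤ Multiset.map g M and Multiset.map f (M + N) ≤ Multiset.map g (M + N), then Multiset.map f N ≤ Multiset.map g N. -/
/-- Multiteam inclusion cancels over additive unions. -/
theorem multiteam_inclusion_cancel
    {α β : Type*} (M N : Multiset α) (f g : α → β)
    (hM : Multiset.map f M ≤ Multiset.map g M)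
    (hMN : Multiset.map f (M + N) ≤ Multiset.map g (M + N)) :
    Multiset.map f N ≤ Multiset.map g N := by
  have h1 : Multiset.map f M = Multiset.map g M :=
    Multiset.eq_of_le_of_card_le hM (by simp)
  have h2 : Multiset.map f (M + N) = Multiset.map g (M + N) :=
    Multiset.eq_of_le_of_card_le hMN (by simp)
  simp only [Multiset.map_add, h1] at h2
  exact le_of_eq (add_left_cancel h2)
end

section
/- A multiteam satisfies the multiteam inclusion atom if and only if it decomposes into duplicate-free multiteams satisfying it: for every multiteam M over α and functions f, g : α → β, Multiset.map f M ≤ Multiset.map g M if and only if there exists a finite list L of multisets over α such that M = L.sum and every N in L satisfies N.Nodup and Multiset.map f N ≤ Multiset.map g N. -/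
/-!
Both sides of `map f M ≤ map g M` have the same cardinality, so the atom really says
`map f M = map g M`. Choosing for each `x ∈ M` some `y ∈ M` with `g y = f x` gives a self-map of
the finite support of `M`; the orbit of a periodic point of it is a duplicate-free `N ≤ M` with
`map f N = map g N`, and `M - N` again satisfies the equation, so induction on `M` splits `M`
into such orbits.
-/

namespace Function

variable {γ : Type*}

theorem exists_mem_periodicPts [Finite γ] [Nonempty γ] (φ : γ → γ) : ∃ p, p ∈ periodicPts φ := by
  obtain ⟨m, n, hmn, heq⟩ :=
    Finite.exists_ne_map_eq_of_infinite fun k => φ^[k] (Classical.arbitrary γ)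
  wlog hlt : m < n generalizing m n
  · exact this n m hmn.symm heq.symm (by omega)
  refine ⟨φ^[m] (Classical.arbitrary γ), mk_mem_periodicPts (Nat.sub_pos_of_lt hlt) ?_⟩
  rw [IsPeriodicPt, IsFixedPt, ← iterate_add_apply, Nat.sub_add_cancel hlt.le, heq]

theorem map_toMultiset_periodicOrbit {φ : γ → γ} {p : γ} (hp : p ∈ periodicPts φ) :
    (periodicOrbit φ p).toMultiset.map φ = (periodicOrbit φ p).toMultiset := by
  conv_rhs => rw [← periodicOrbit_apply_eq hp]
  simp only [periodicOrbit_def, minimalPeriod_apply hp, Cycle.coe_toMultiset, Multiset.map_coe,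
    List.map_map, comp_def, ← iterate_succ_apply, iterate_succ_apply']

end Function

namespace Multiset

variable {α β : Type*} {f g : α → β}

theorem exists_nodup_le_map_eq_map {M : Multiset α} (h : M.map f = M.map g) (hM : M ≠ 0) :
    ∃ N ≤ M, N ≠ 0 ∧ N.Nodup ∧ N.map f = N.map g := by
  have hsucc (x : {x // x ∈ M}) : ∃ y : {x // x ∈ M}, g y = f x := by
    obtain ⟨y, hy, hyx⟩ := mem_map.mp (h ▸ mem_map_of_mem f x.2)
    exact ⟨⟨y, hy⟩, hyx⟩
  choose φ hφ using hsucc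
  have : Finite {x // x ∈ M} := M.finite_toSet.to_subtype
  have : Nonempty {x // x ∈ M} := let ⟨x, hx⟩ := exists_mem_of_ne_zero hM; ⟨⟨x, hx⟩⟩
  obtain ⟨p, hp⟩ := Function.exists_mem_periodicPts φ
  set O := (Function.periodicOrbit φ p).toMultiset
  have hO : O.Nodup := by
    simpa [O, Function.periodicOrbit_def] using Function.nodup_periodicOrbit (f := φ) (x := p)
  have hN : (O.map Subtype.val).Nodup := hO.map Subtype.val_injective
  refine ⟨O.map Subtype.val, (le_iff_subset hN).mpr ?_, ?_, hN, ?_⟩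
  · intro x hx
    obtain ⟨y, -, rfl⟩ := mem_map.mp hx
    exact y.2
  · rw [← card_pos, card_map, Cycle.card_toMultiset, Function.periodicOrbit_length]
    exact Function.minimalPeriod_pos_of_mem_periodicPts hp
  · calc (O.map Subtype.val).map f = O.map (g ∘ Subtype.val ∘ φ) := by
          rw [map_map]; exact map_congr rfl fun x _ => (hφ x).symm
      _ = (O.map Subtype.val).map g := by
          rw [← map_map, ← map_map, Function.map_toMultiset_periodicOrbit hp, map_map]

theorem exists_nodup_decomposition_of_map_eq_map {M : Multiset α} (h : M.map f = M.map g) :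
    ∃ L : List (Multiset α), M = L.sum ∧ ∀ N ∈ L, N.Nodup ∧ N.map f = N.map g := by
  classical
  induction M using strongInductionOn with
  | ih M ih =>
  rcases eq_or_ne M 0 with rfl | hM
  · exact ⟨[], rfl, by simp⟩
  obtain ⟨N, hNM, hN0, hNd, hNfg⟩ := exists_nodup_le_map_eq_map h hM
  have hsplit : M - N + N = M := tsub_add_cancel_of_le hNM
  have hrest : (M - N).map f = (M - N).map g := by
    apply add_right_cancel (b := N.map f)
    rw [← map_add, hsplit, h, hNfg, ← map_add, hsplit]
  have hlt : M - N < M := by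
    conv_rhs => rw [← hsplit]
    exact lt_add_of_pos_right _ (pos_iff_ne_zero.mpr hN0)
  obtain ⟨L, hL, hLfg⟩ := ih (M - N) hlt hrest
  refine ⟨N :: L, by rw [List.sum_cons, ← hL, add_comm, hsplit], ?_⟩
  rintro N' (_ | ⟨_, hN'⟩)
  exacts [⟨hNd, hNfg⟩, hLfg N' hN']

end Multiset

/-- A multiteam satisfies the multiteam inclusion atom if and only if it decomposes
into duplicate-free multiteams satisfying it. -/
theorem multiteam_inclusion_iff_nodup_decomposition
    {α β : Type*} (M : Multiset α) (f g : α → β) :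
    Multiset.map f M ≤ Multiset.map g M ↔
      ∃ L : List (Multiset α), M = L.sum ∧
        ∀ N ∈ L, N.Nodup ∧ Multiset.map f N ≤ Multiset.map g N := by
  constructor
  · intro h
    obtain ⟨L, hL, hLfg⟩ := Multiset.exists_nodup_decomposition_of_map_eq_map
      (Multiset.eq_of_le_of_card_le h (by simp))
    exact ⟨L, hL, fun N hN => ⟨(hLfg N hN).1, (hLfg N hN).2.le⟩⟩
  · rintro ⟨L, rfl, hL⟩
    have hmap (φ : α → β) : L.sum.map φ = (L.map (Multiset.map φ)).sum :=
      map_list_sum (Multiset.mapAddMonoidHom φ) L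
    rw [hmap, hmap]
    exact List.sum_le_sum fun N hN => (hL N hN).2
end

section
/- The probabilistic and the counting formulations of statistical independence coincide: let M be a nonempty multiteam over α and f : α → β, g : α → γ. Then the following are equivalent: (1) for every a occurring as a value of f on M and every b occurring as a value of g on M, (card of M filtered to {s | f s = a} : ℚ) / card M = (card of M filtered to {s | f s = a ∧ g s = b}) / (card of M filtered to {s | g s = b}); (2) for all a : β and b : γ, (card of M filtered to {s | f s = a}) * (card of M filtered to {s | g s = b}) = (card M) * (card of M filtered to {s | f s = a ∧ g s = b}). -/
/-- The probabilistic and the counting formulations of statistical independence coincide. -/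
theorem statistical_independence_prob_iff_counting
    {α β γ : Type*} [DecidableEq β] [DecidableEq γ]
    (M : Multiset α) (hM : M ≠ 0) (f : α → β) (g : α → γ) :
    (∀ a ∈ (Multiset.map f M).toFinset, ∀ b ∈ (Multiset.map g M).toFinset,
        ((M.filter (fun s => f s = a)).card : ℚ) / (M.card : ℚ) =
          ((M.filter (fun s => f s = a ∧ g s = b)).card : ℚ) /
            ((M.filter (fun s => g s = b)).card : ℚ)) ↔
      (∀ (a : β) (b : γ),
        (M.filter (fun s => f s = a)).card * (M.filter (fun s => g s = b)).card =
          M.card * (M.filter (fun s => f s = a ∧ g s = b)).card) := by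
  have hMcard : 0 < M.card := Multiset.card_pos.mpr hM
  have hmem : ∀ a : β, a ∈ (Multiset.map f M).toFinset ↔
      0 < (M.filter (fun s => f s = a)).card := by
    intro a
    simp only [Multiset.mem_toFinset, Multiset.mem_map, Multiset.card_pos_iff_exists_mem,
      Multiset.mem_filter]
  have hmem' : ∀ b : γ, b ∈ (Multiset.map g M).toFinset ↔
      0 < (M.filter (fun s => g s = b)).card := by
    intro b
    simp only [Multiset.mem_toFinset, Multiset.mem_map, Multiset.card_pos_iff_exists_mem,
      Multiset.mem_filter]
  constructor
  · intro h a b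
    by_cases ha : a ∈ (Multiset.map f M).toFinset
    · by_cases hb : b ∈ (Multiset.map g M).toFinset
      · have hga : 0 < (M.filter (fun s => g s = b)).card := (hmem' b).mp hb
        have := h a ha b hb
        have h2 : ((M.filter (fun s => f s = a)).card : ℚ) *
            ((M.filter (fun s => g s = b)).card : ℚ) =
            (M.card : ℚ) * ((M.filter (fun s => f s = a ∧ g s = b)).card : ℚ) := by
          field_simp at this
          linarith [this]
        exact_mod_cast h2
      · have hb0 : (M.filter (fun s => g s = b)).card = 0 := by
          by_contra h0
          exact hb ((hmem' b).mpr (Nat.pos_of_ne_zero h0))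
        have hle : (M.filter (fun s => f s = a ∧ g s = b)).card ≤
            (M.filter (fun s => g s = b)).card :=
          Multiset.card_le_card (Multiset.monotone_filter_right M (fun s hs => hs.2))
        have h0 : (M.filter (fun s => f s = a ∧ g s = b)).card = 0 := by omega
        rw [hb0, h0, Nat.mul_zero, Nat.mul_zero]
    · have ha0 : (M.filter (fun s => f s = a)).card = 0 := by
        by_contra h0
        exact ha ((hmem a).mpr (Nat.pos_of_ne_zero h0))
      have hle : (M.filter (fun s => f s = a ∧ g s = b)).card ≤
          (M.filter (fun s => f s = a)).card :=
        Multiset.card_le_card (Multiset.monotone_filter_right M (fun s hs => hs.1))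
      have h0 : (M.filter (fun s => f s = a ∧ g s = b)).card = 0 := by omega
      rw [ha0, h0, Nat.zero_mul, Nat.mul_zero]
  · intro h a ha b hb
    have hga : 0 < (M.filter (fun s => g s = b)).card := (hmem' b).mp hb
    have := h a b
    have hc : ((M.filter (fun s => f s = a)).card : ℚ) *
        ((M.filter (fun s => g s = b)).card : ℚ) =
        (M.card : ℚ) * ((M.filter (fun s => f s = a ∧ g s = b)).card : ℚ) := by
      exact_mod_cast this
    rw [div_eq_div_iff (by positivity) (by positivity)]
    linarith [hc]
end

section
/- Let k, ℓ ≥ 1 be natural numbers and define the multiteam M_k : Multiset (Bool × Bool) consisting of (false,false) with multiplicity 1, (false,true) with multiplicity k, (true,false) with multiplicity k, and (true,true) with multiplicity k². Then: (a) M_k satisfies the statistical independence atom Prod.fst ⊥⊥ Prod.snd; and (b) the additive union M_k + M_ℓ satisfies Prod.fst ⊥⊥ Prod.snd if and only if k = ℓ. -/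
/-- The multiteam `M_k` over `Bool × Bool`: `(false,false)` with multiplicity `1`,
`(false,true)` and `(true,false)` with multiplicity `k`, and `(true,true)` with
multiplicity `k²`. -/
def multiteamMk (k : ℕ) : Multiset (Bool × Bool) :=
  Multiset.replicate 1 (false, false) + Multiset.replicate k (false, true) +
    Multiset.replicate k (true, false) + Multiset.replicate (k ^ 2) (true, true)

/-- The statistical independence atom `Prod.fst ⊥⊥ Prod.snd` for a multiteam over
`Bool × Bool`. -/
def statIndepFstSnd (M : Multiset (Bool × Bool)) : Prop :=
  ∀ a b : Bool,
    (M.filter (fun s => s.1 = a)).card * (M.filter (fun s => s.2 = b)).card =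
      M.card * (M.filter (fun s => s.1 = a ∧ s.2 = b)).card

lemma card_filter_replicate {α} (p : α → Prop) [DecidablePred p] (n : ℕ) (x : α) :
    (Multiset.filter p (Multiset.replicate n x)).card = if p x then n else 0 := by
  induction n with
  | zero => simp
  | succ n ih =>
    rw [Multiset.replicate_succ, Multiset.filter_cons]
    split <;> simp_all

/-- `M_k` satisfies `fst ⊥⊥ snd`, and `M_k + M_ℓ` satisfies it iff `k = ℓ`. -/
theorem multiteamMk_indep_and_sum_indep_iff (k l : ℕ) (hk : 1 ≤ k) (hl : 1 ≤ l) :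
    statIndepFstSnd (multiteamMk k) ∧
      (statIndepFstSnd (multiteamMk k + multiteamMk l) ↔ k = l) := by
  constructor
  · intro a b
    simp only [multiteamMk, Multiset.filter_add, Multiset.card_add, card_filter_replicate,
      Multiset.card_replicate]
    cases a <;> cases b <;> simp <;> ring
  · constructor
    · intro h
      have := h true true
      simp only [multiteamMk, Multiset.filter_add, Multiset.card_add, card_filter_replicate,
        Multiset.card_replicate] at this
      simp at this
      nlinarith [sq_nonneg ((1+k)*l - (1+l)*k : ℤ), this]
    · rintro rfl
      intro a b
      simp only [multiteamMk, Multiset.filter_add, Multiset.card_add, card_filter_replicate,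
        Multiset.card_replicate]
      cases a <;> cases b <;> simp <;> ring
end

section
/- The team-semantical version of multiteam inclusion is characterized by covers by balanced subsets: let X : Finset α and f, g : α → β. There exists a multiplicity function m : α → ℕ with m s > 0 for all s ∈ X such that the multiteam W (obtained by taking each s ∈ X with multiplicity m s) satisfies Multiset.map f W ≤ Multiset.map g W, if and only if there exists a finite list L of finsets Y ⊆ X such that every element of X belongs to some Y in L and every Y in L satisfies Multiset.map f Y.val ≤ Multiset.map g Y.val. -/
/-!
If `W.map f ≤ W.map g` then `W.map f = W.map g`, both sides having the same size. Hence every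
`t ∈ W` has a successor `u ∈ W` with `g u = f t`; the successor map permutes its periodic points,
so they form a nonempty set `Y` with `Y.map f = Y.map g`. Removing `Y` from `W` and repeating
writes `W` as a sum of such sets, which then cover the support of `W`. Conversely, the sum of the
sets of such a cover is a multiteam supported on `X` satisfying the atom.
-/

open Function

section

variable {α β : Type*}

theorem Function.exists_mem_periodicPts_s11 [Finite α] [Nonempty α] (σ : α → α) :
    ∃ x, x ∈ periodicPts σ := by
  obtain ⟨x⟩ := ‹Nonempty α›
  obtain ⟨m, n, hne, heq⟩ := Finite.exists_ne_map_eq_of_infinite (σ^[·] x)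
  wlog hmn : m < n generalizing m n
  · exact this n m hne.symm heq.symm (by omega)
  refine ⟨σ^[m] x, mk_mem_periodicPts (n := n - m) (by omega) ?_⟩
  rw [IsPeriodicPt, IsFixedPt, ← iterate_add_apply, Nat.sub_add_cancel hmn.le]
  exact heq.symm

theorem Function.exists_finset_nonempty_map_val_eq [Finite α] [Nonempty α] (σ : α → α) :
    ∃ Y : Finset α, Y.Nonempty ∧ Y.val.map σ = Y.val := by
  obtain ⟨x, hx⟩ := exists_mem_periodicPts_s11 σ
  have hfin := (periodicPts σ).toFinite
  refine ⟨hfin.toFinset, ⟨x, hfin.mem_toFinset.2 hx⟩, ?_⟩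
  classical
  have hbij := bijOn_periodicPts σ
  rw [← Finset.image_val_of_injOn (by simpa using hbij.injOn)]
  congr 1
  ext y
  simpa using Set.ext_iff.1 hbij.image_eq y

namespace Multiset

variable {f g : α → β}

theorem map_eq_map_of_map_le {W : Multiset α} (h : W.map f ≤ W.map g) : W.map f = W.map g :=
  eq_of_le_of_card_le h (by simp)

theorem exists_finset_le_map_eq_map {W : Multiset α} (hW : W ≠ 0) (h : W.map f = W.map g) :
    ∃ Y : Finset α, Y.Nonempty ∧ Y.val ≤ W ∧ Y.val.map f = Y.val.map g := by
  have hsucc : ∀ t : {t // t ∈ W}, ∃ u : {u // u ∈ W}, g u = f t := fun t => by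
    obtain ⟨u, hu, hgu⟩ := mem_map.1 (h ▸ mem_map_of_mem f t.2)
    exact ⟨⟨u, hu⟩, hgu⟩
  choose σ hσ using hsucc
  have : Finite {t // t ∈ W} := W.finite_toSet.to_subtype
  have : Nonempty {t // t ∈ W} := let ⟨t, ht⟩ := exists_mem_of_ne_zero hW; ⟨⟨t, ht⟩⟩
  obtain ⟨Y, hY, hσY⟩ := exists_finset_nonempty_map_val_eq σ
  refine ⟨Y.map (Embedding.subtype _), hY.map, ?_, ?_⟩
  · rw [le_iff_subset (Finset.nodup _)]
    intro a ha
    obtain ⟨t, -, rfl⟩ := Finset.mem_map.1 ha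
    exact t.2
  · simp only [Finset.map_val, Embedding.coe_subtype, map_map]
    calc Y.val.map (f ∘ Subtype.val) = Y.val.map ((g ∘ Subtype.val) ∘ σ) :=
          map_congr rfl fun t _ => (hσ t).symm
      _ = (Y.val.map σ).map (g ∘ Subtype.val) := (map_map _ _ _).symm
      _ = Y.val.map (g ∘ Subtype.val) := by rw [hσY]

theorem exists_list_finset_sum_eq {W : Multiset α} (h : W.map f = W.map g) :
    ∃ L : List (Finset α), (L.map Finset.val).sum = W ∧ ∀ Y ∈ L, Y.val.map f = Y.val.map g := by
  induction W using strongInductionOn with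
  | ih W ih =>
    rcases eq_or_ne W 0 with rfl | hW
    · exact ⟨[], rfl, by simp⟩
    obtain ⟨Y, hY, hYW, hYbal⟩ := exists_finset_le_map_eq_map hW h
    obtain ⟨W', rfl⟩ := le_iff_exists_add.1 hYW
    have hW' : W'.map f = W'.map g := by
      simpa only [map_add, hYbal, add_right_inj] using h
    have hW'lt : W' < Y.val + W' :=
      lt_add_of_pos_left _ (by simpa [pos_iff_ne_zero] using hY.ne_empty)
    obtain ⟨L, hL, hLbal⟩ := ih W' hW'lt hW'
    refine ⟨Y :: L, by simp [hL], ?_⟩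
    simpa [hYbal] using hLbal

theorem mem_list_sum_map_val {L : List (Finset α)} {a : α} :
    a ∈ (L.map Finset.val).sum ↔ ∃ Y ∈ L, a ∈ Y := by
  induction L with
  | nil => simp
  | cons Y L ih => simp [ih]

theorem map_list_sum_le {Ms : List (Multiset α)} (h : ∀ M ∈ Ms, M.map f ≤ M.map g) :
    Ms.sum.map f ≤ Ms.sum.map g := by
  induction Ms with
  | nil => simp
  | cons M Ms ih =>
    simp only [List.sum_cons, map_add]
    exact add_le_add (h M (by simp)) (ih fun N hN => h N (by simp [hN]))

end Multiset

theorem exists_pos_multiplicity_iff_exists_multiset (X : Finset α) (P : Multiset α → Prop) :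
    (∃ m : α → ℕ, (∀ s ∈ X, 0 < m s) ∧ P (∑ s ∈ X, Multiset.replicate (m s) s)) ↔
      ∃ W : Multiset α, (∀ a, a ∈ W ↔ a ∈ X) ∧ P W := by
  classical
  constructor
  · rintro ⟨m, hm, hP⟩
    refine ⟨_, fun a => ?_, hP⟩
    simp only [Multiset.mem_sum, Multiset.mem_replicate]
    exact ⟨fun ⟨s, hs, _, has⟩ => has ▸ hs, fun ha => ⟨a, ha, (hm a ha).ne', rfl⟩⟩
  · rintro ⟨W, hWX, hP⟩
    have hX : W.toFinset = X := by ext a; simp [hWX]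
    refine ⟨W.count, fun s hs => Multiset.count_pos.2 ((hWX s).2 hs), ?_⟩
    simpa only [← hX, ← Multiset.nsmul_singleton, Multiset.toFinset_sum_count_nsmul_eq] using hP

end

theorem tsv_multiteam_inclusion_iff_cycle_cover_general
    {α β : Type*} (X : Finset α) (f g : α → β) :
    (∃ m : α → ℕ, (∀ s ∈ X, 0 < m s) ∧
        Multiset.map f (∑ s ∈ X, Multiset.replicate (m s) s) ≤
          Multiset.map g (∑ s ∈ X, Multiset.replicate (m s) s)) ↔
      ∃ L : List (Finset α),
        (∀ Y ∈ L, Y ⊆ X) ∧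
        (∀ s ∈ X, ∃ Y ∈ L, s ∈ Y) ∧
        (∀ Y ∈ L, Multiset.map f Y.val ≤ Multiset.map g Y.val) := by
  refine (exists_pos_multiplicity_iff_exists_multiset X fun W => W.map f ≤ W.map g).trans ⟨?_, ?_⟩
  · rintro ⟨W, hWX, hW⟩
    obtain ⟨L, rfl, hL⟩ := Multiset.exists_list_finset_sum_eq (Multiset.map_eq_map_of_map_le hW)
    refine ⟨L, fun Y hY s hs => ?_, fun s hs => ?_, fun Y hY => (hL Y hY).le⟩
    · exact (hWX s).1 (Multiset.mem_list_sum_map_val.2 ⟨Y, hY, hs⟩)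
    · exact Multiset.mem_list_sum_map_val.1 ((hWX s).2 hs)
  · rintro ⟨L, hLX, hcover, hL⟩
    refine ⟨(L.map Finset.val).sum, fun a => ?_, Multiset.map_list_sum_le ?_⟩
    · rw [Multiset.mem_list_sum_map_val]
      exact ⟨fun ⟨Y, hY, ha⟩ => hLX Y hY ha, hcover a⟩
    · simpa using hL

/-- The team-semantical version of multiteam inclusion is characterized by covers
by balanced subsets. -/
theorem tsv_multiteam_inclusion_iff_cycle_cover
    {α β : Type*} [DecidableEq α] (X : Finset α) (f g : α → β) :
    (∃ m : α → ℕ, (∀ s ∈ X, 0 < m s) ∧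
        Multiset.map f (∑ s ∈ X, Multiset.replicate (m s) s) ≤
          Multiset.map g (∑ s ∈ X, Multiset.replicate (m s) s)) ↔
      ∃ L : List (Finset α),
        (∀ Y ∈ L, Y ⊆ X) ∧
        (∀ s ∈ X, ∃ Y ∈ L, s ∈ Y) ∧
        (∀ Y ∈ L, Multiset.map f Y.val ≤ Multiset.map g Y.val) :=
  tsv_multiteam_inclusion_iff_cycle_cover_general X f g
end

section
/- Closed sets of real-weighted multiteams are preserved by split disjunction: let α be a finite type and let P and Q be closed sets of real-weighted multiteams over α. Then the set R = { r | there exists s : α → ℝ with 0 ≤ s a ≤ 1 for all a, such that (fun a => s a * r a) ∈ P and (fun a => (1 - s a) * r a) ∈ Q } is closed. -/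
/-- A set `S` of real-weighted multiteams over a finite type `α` is (topologically)
closed if for every sequence of elements of `S` that all have the same support and
converge pointwise, the pointwise limit belongs to `S`. -/
def MultiteamClosed {α : Type*} [Fintype α] (S : Set (α → ℝ)) : Prop :=
  ∀ (r : ℕ → α → ℝ) (l : α → ℝ),
    (∀ i, r i ∈ S) →
    (∀ i j, {a | 0 < r i a} = {a | 0 < r j a}) →
    (∀ a, Filter.Tendsto (fun i => r i a) Filter.atTop (nhds (l a))) →
    l ∈ S

/-- A set `S` of real-weighted multiteams over a finite type `α` is (topologically)
open if around every `r ∈ S` there is an `ε > 0` such that every real-weighted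
multiteam `t` with `supp t ⊆ supp r` and approximation error `Σ_a |r a - t a| < ε`
belongs to `S`. -/
def MultiteamOpen {α : Type*} [Fintype α] (S : Set (α → ℝ)) : Prop :=
  ∀ r ∈ S, ∃ ε > 0, ∀ t : α → ℝ, (∀ a, 0 ≤ t a) →
    {a | 0 < t a} ⊆ {a | 0 < r a} →
    (∑ a, |r a - t a|) < ε → t ∈ S

/-- Closed sets of real-weighted multiteams are preserved by split disjunction. -/
theorem multiteamClosed_split_disjunction
    {α : Type*} [Fintype α] (P Q : Set (α → ℝ))
    (hPmt : ∀ r ∈ P, ∀ a, 0 ≤ r a) (hQmt : ∀ r ∈ Q, ∀ a, 0 ≤ r a)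
    (hP : MultiteamClosed P) (hQ : MultiteamClosed Q) :
    MultiteamClosed { r | ∃ s : α → ℝ, (∀ a, 0 ≤ s a ∧ s a ≤ 1) ∧
      (fun a => s a * r a) ∈ P ∧ (fun a => (1 - s a) * r a) ∈ Q } := by
  classical
  intro r l hr _hsupp hlim
  choose s hs hsP hsQ using hr
  -- pigeonhole on the (finitely many) support patterns of the two parts
  set f : ℕ → Set α × Set α :=
    fun i => ({a | 0 < s i a * r i a}, {a | 0 < (1 - s i a) * r i a}) with hf
  have hfreq : ∃ b, ∃ᶠ i in Filter.atTop, f i = b := by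
    by_contra h
    push_neg at h
    have h2 : ∀ᶠ i in Filter.atTop, ∀ b, f i ≠ b := Filter.eventually_all.2 h
    obtain ⟨i, hi⟩ := h2.exists
    exact hi (f i) rfl
  obtain ⟨b, hb⟩ := hfreq
  obtain ⟨φ1, hφ1mono, hφ1⟩ := Filter.extraction_of_frequently_atTop hb
  -- compactness of [0,1]^α : extract a convergent subsequence of the splitters
  have hcpt : IsCompact (Set.pi Set.univ fun _ : α => Set.Icc (0:ℝ) 1) :=
    isCompact_univ_pi fun _ => isCompact_Icc
  have hmem : ∀ n, s (φ1 n) ∈ Set.pi Set.univ fun _ : α => Set.Icc (0:ℝ) 1 := by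
    intro n
    intro a _
    exact ⟨(hs (φ1 n) a).1, (hs (φ1 n) a).2⟩
  obtain ⟨σ, hσmem, φ2, hφ2mono, hφ2⟩ := hcpt.tendsto_subseq hmem
  set ψ : ℕ → ℕ := φ1 ∘ φ2 with hψ
  have hψmono : StrictMono ψ := hφ1mono.comp hφ2mono
  have hψtop : Filter.Tendsto ψ Filter.atTop Filter.atTop := hψmono.tendsto_atTop
  have hσ : ∀ a, Filter.Tendsto (fun i => s (ψ i) a) Filter.atTop (nhds (σ a)) := by
    intro a
    have := tendsto_pi_nhds.1 hφ2 a
    exact this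
  have hpat : ∀ i, f (ψ i) = b := fun i => hφ1 (φ2 i)
  -- limits of the two parts
  have hPlim : ∀ a, Filter.Tendsto (fun i => s (ψ i) a * r (ψ i) a)
      Filter.atTop (nhds (σ a * l a)) := by
    intro a
    exact (hσ a).mul ((hlim a).comp hψtop)
  have hQlim : ∀ a, Filter.Tendsto (fun i => (1 - s (ψ i) a) * r (ψ i) a)
      Filter.atTop (nhds ((1 - σ a) * l a)) := by
    intro a
    exact (tendsto_const_nhds.sub (hσ a)).mul ((hlim a).comp hψtop)
  have hPmem : (fun a => σ a * l a) ∈ P := by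
    refine hP (fun i a => s (ψ i) a * r (ψ i) a) _ (fun i => hsP (ψ i)) ?_ hPlim
    intro i j
    have hi := congrArg Prod.fst (hpat i)
    have hj := congrArg Prod.fst (hpat j)
    simp only [hf] at hi hj
    exact hi.trans hj.symm
  have hQmem : (fun a => (1 - σ a) * l a) ∈ Q := by
    refine hQ (fun i a => (1 - s (ψ i) a) * r (ψ i) a) _ (fun i => hsQ (ψ i)) ?_ hQlim
    intro i j
    have hi := congrArg Prod.snd (hpat i)
    have hj := congrArg Prod.snd (hpat j)
    simp only [hf] at hi hj
    exact hi.trans hj.symm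
  exact ⟨σ, fun a => ⟨(hσmem a (Set.mem_univ a)).1, (hσmem a (Set.mem_univ a)).2⟩,
    hPmem, hQmem⟩
end

section
/- Open sets of real-weighted multiteams are preserved by split disjunction: let α be a finite type and let P and Q be open sets of real-weighted multiteams over α. Then the set R = { r | there exists s : α → ℝ with 0 ≤ s a ≤ 1 for all a, such that (fun a => s a * r a) ∈ P and (fun a => (1 - s a) * r a) ∈ Q } is open. -/
/-- Open sets of real-weighted multiteams are preserved by split disjunction. -/
theorem multiteamOpen_split_disjunction
    {α : Type*} [Fintype α] (P Q : Set (α → ℝ))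
    (hPmt : ∀ r ∈ P, ∀ a, 0 ≤ r a) (hQmt : ∀ r ∈ Q, ∀ a, 0 ≤ r a)
    (hP : MultiteamOpen P) (hQ : MultiteamOpen Q) :
    MultiteamOpen { r | ∃ s : α → ℝ, (∀ a, 0 ≤ s a ∧ s a ≤ 1) ∧
      (fun a => s a * r a) ∈ P ∧ (fun a => (1 - s a) * r a) ∈ Q } := by
  rintro r ⟨s, hs, hsP, hsQ⟩
  obtain ⟨ε₁, hε₁, h1⟩ := hP _ hsP
  obtain ⟨ε₂, hε₂, h2⟩ := hQ _ hsQ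
  refine ⟨min ε₁ ε₂, lt_min hε₁ hε₂, fun t ht hsupp herr => ⟨s, hs, ?_, ?_⟩⟩
  · apply h1
    · intro a; exact mul_nonneg (hs a).1 (ht a)
    · intro a ha
      simp only [Set.mem_setOf_eq] at *
      have hta : 0 < t a := by nlinarith [(hs a).1, (hs a).2, ht a]
      have hra : 0 < r a := hsupp hta
      have hsa : 0 < s a := by nlinarith
      exact mul_pos hsa hra
    · calc ∑ a, |s a * r a - s a * t a| ≤ ∑ a, |r a - t a| := by
            apply Finset.sum_le_sum
            intro a _
            rw [← mul_sub, abs_mul, abs_of_nonneg (hs a).1]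
            nlinarith [(hs a).2, abs_nonneg (r a - t a)]
        _ < ε₁ := lt_of_lt_of_le herr (min_le_left _ _)
  · apply h2
    · intro a; exact mul_nonneg (by linarith [(hs a).2]) (ht a)
    · intro a ha
      simp only [Set.mem_setOf_eq] at *
      have hta : 0 < t a := by nlinarith [(hs a).1, (hs a).2, ht a]
      have hra : 0 < r a := hsupp hta
      have hsa : 0 < 1 - s a := by nlinarith
      exact mul_pos hsa hra
    · calc ∑ a, |(1 - s a) * r a - (1 - s a) * t a| ≤ ∑ a, |r a - t a| := by
            apply Finset.sum_le_sum
            intro a _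
            rw [← mul_sub, abs_mul, abs_of_nonneg (by linarith [(hs a).2])]
            nlinarith [(hs a).1, abs_nonneg (r a - t a)]
        _ < ε₂ := lt_of_lt_of_le herr (min_le_right _ _)
end

section
/- Closed sets of real-weighted multiteams are preserved by existential quantification: let α and B be finite types and let P be a closed set of real-weighted multiteams over α × B. Then the set S = { r : α → ℝ, a real-weighted multiteam over α | there exists F : α → B → ℝ with F a b ≥ 0 for all a, b and Σ_b F a b = 1 for all a, such that (fun p : α × B => r p.1 * F p.1 p.2) ∈ P } is closed. -/
/-- Closed sets of real-weighted multiteams are preserved by existential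
quantification. -/
theorem multiteamClosed_existential_quantification
    {α B : Type*} [Fintype α] [Fintype B] (P : Set (α × B → ℝ))
    (hPmt : ∀ r ∈ P, ∀ p, 0 ≤ r p) (hP : MultiteamClosed P) :
    MultiteamClosed { r : α → ℝ | (∀ a, 0 ≤ r a) ∧
      ∃ F : α → B → ℝ, (∀ a b, 0 ≤ F a b) ∧ (∀ a, ∑ b, F a b = 1) ∧
        (fun p : α × B => r p.1 * F p.1 p.2) ∈ P } := by
  intro r l hr hsupp hlim
  have hl0 : ∀ a, 0 ≤ l a := fun a =>
    le_of_tendsto_of_tendsto' tendsto_const_nhds (hlim a) (fun i => (hr i).1 a)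
  choose F hF0 hF1 hFP using fun i => (hr i).2
  set g : ℕ → α × B → ℝ := fun i p => r i p.1 * F i p.1 p.2 with hg
  -- pigeonhole on supports of g
  obtain ⟨T, hT⟩ : ∃ T : Set (α × B), {i | {p | 0 < g i p} = T}.Infinite := by
    obtain ⟨T, hT⟩ := Finite.exists_infinite_fiber (f := fun i => {p | 0 < g i p})
    exact ⟨T, Set.infinite_coe_iff.1 hT⟩
  obtain ⟨φ, hφmono, hφ⟩ := Filter.extraction_of_frequently_atTop
    (Nat.frequently_atTop_iff_infinite.2 hT)
  -- compactness
  have hK : IsCompact {f : α → B → ℝ | ∀ a b, f a b ∈ Set.Icc (0:ℝ) 1} := by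
    have he : {f : α → B → ℝ | ∀ a b, f a b ∈ Set.Icc (0:ℝ) 1} =
        Set.pi Set.univ (fun _ : α => Set.pi Set.univ fun _ : B => Set.Icc (0:ℝ) 1) := by
      ext f; simp [Set.mem_pi, Pi.le_def, forall_and]
    rw [he]
    exact isCompact_univ_pi fun _ => isCompact_univ_pi fun _ => isCompact_Icc
  have hmem : ∀ k, F (φ k) ∈ {f : α → B → ℝ | ∀ a b, f a b ∈ Set.Icc (0:ℝ) 1} := by
    intro k a b
    refine ⟨hF0 _ a b, ?_⟩
    calc F (φ k) a b ≤ ∑ b', F (φ k) a b' :=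
          Finset.single_le_sum (fun b' _ => hF0 _ a b') (Finset.mem_univ b)
      _ = 1 := hF1 _ a
  obtain ⟨Fl, hFlK, ψ, hψmono, hψ⟩ := hK.tendsto_subseq hmem
  set idx : ℕ → ℕ := fun k => φ (ψ k) with hidx
  have hidxmono : StrictMono idx := hφmono.comp hψmono
  have hidxT : Filter.Tendsto idx Filter.atTop Filter.atTop := hidxmono.tendsto_atTop
  have hFconv : ∀ a b, Filter.Tendsto (fun k => F (idx k) a b) Filter.atTop (nhds (Fl a b)) := by
    intro a b
    have h1 := tendsto_pi_nhds.1 hψ a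
    exact tendsto_pi_nhds.1 h1 b
  have hrconv : ∀ a, Filter.Tendsto (fun k => r (idx k) a) Filter.atTop (nhds (l a)) :=
    fun a => (hlim a).comp hidxT
  have hgconv : ∀ p : α × B, Filter.Tendsto (fun k => g (idx k) p) Filter.atTop
      (nhds (l p.1 * Fl p.1 p.2)) := fun p => (hrconv p.1).mul (hFconv p.1 p.2)
  have hPlim : (fun p : α × B => l p.1 * Fl p.1 p.2) ∈ P := by
    refine hP (fun k => g (idx k)) _ (fun k => hFP (idx k)) ?_ hgconv
    intro i j
    rw [hφ (ψ i), hφ (ψ j)]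
  refine ⟨hl0, Fl, fun a b => (hFlK a b).1, ?_, hPlim⟩
  intro a
  have h1 : Filter.Tendsto (fun k => ∑ b, F (idx k) a b) Filter.atTop
      (nhds (∑ b, Fl a b)) := tendsto_finset_sum _ fun b _ => hFconv a b
  have h2 : Filter.Tendsto (fun k => ∑ b, F (idx k) a b) Filter.atTop (nhds 1) := by
    simp only [hF1]; exact (tendsto_const_nhds : Filter.Tendsto (fun _ : ℕ => (1:ℝ)) _ _)
  exact tendsto_nhds_unique h1 h2
end

section
/- Let α be a finite type and let S be a set of real-weighted multiteams over α that is invariant under positive scalar multiplication (for every real c > 0 and every r, r ∈ S if and only if (fun a => c * r a) ∈ S). Then the following are equivalent: (1) S is both open and closed; (2) for every r ∈ S and every real-weighted multiteam t with supp(t) ⊆ supp(r), t ∈ S; (3) S is downwards closed, i.e. for every r ∈ S and every real-weighted multiteam t with t a ≤ r a for all a, t ∈ S. -/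
/-- For a multiplication-invariant set of real-weighted multiteams, being clopen,
being closed under shrinking the support, and being downwards closed coincide. -/
theorem multiteam_clopen_tfae
    {α : Type*} [Fintype α] (S : Set (α → ℝ))
    (hSmt : ∀ r ∈ S, ∀ a, 0 ≤ r a)
    (hinv : ∀ c : ℝ, 0 < c → ∀ r : α → ℝ, (r ∈ S ↔ (fun a => c * r a) ∈ S)) :
    List.TFAE [
      MultiteamOpen S ∧ MultiteamClosed S,
      ∀ r ∈ S, ∀ t : α → ℝ, (∀ a, 0 ≤ t a) →
        {a | 0 < t a} ⊆ {a | 0 < r a} → t ∈ S,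
      ∀ r ∈ S, ∀ t : α → ℝ, (∀ a, 0 ≤ t a) → (∀ a, t a ≤ r a) → t ∈ S] := by
  tfae_have 2 → 3 := by
    intro h2 r hr t ht hle
    exact h2 r hr t ht (fun a ha => lt_of_lt_of_le ha (hle a))
  tfae_have 3 → 2 := by
    intro h3 r hr t ht hsupp
    have hts0 : ∀ a, r a = 0 → t a = 0 := by
      intro a h
      by_contra hne
      exact (hsupp (lt_of_le_of_ne (ht a) (Ne.symm hne))).ne' h
    set c : ℝ := 1 + ∑ a, t a / r a with hc
    have hterms : ∀ a ∈ Finset.univ, (0:ℝ) ≤ t a / r a :=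
      fun a _ => div_nonneg (ht a) (hSmt r hr a)
    have hsum : (0:ℝ) ≤ ∑ a, t a / r a := Finset.sum_nonneg hterms
    have hcpos : 0 < c := by rw [hc]; linarith
    have hcr : (fun a => c * r a) ∈ S := (hinv c hcpos r).mp hr
    apply h3 _ hcr t ht
    intro a
    rcases (hSmt r hr a).lt_or_eq with h | h
    · have h1 : t a / r a ≤ ∑ b, t b / r b :=
        Finset.single_le_sum hterms (Finset.mem_univ a)
      have h2 : t a / r a ≤ c := by linarith
      calc t a = (t a / r a) * r a := by field_simp
        _ ≤ c * r a := by nlinarith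
    · rw [hts0 a h.symm, ← h]
      simp
  tfae_have 2 → 1 := by
    intro h2
    constructor
    · intro r hr
      exact ⟨1, one_pos, fun t ht hsupp _ => h2 r hr t ht hsupp⟩
    · intro r l hrS hsupp htend
      have hlnn : ∀ a, 0 ≤ l a :=
        fun a => ge_of_tendsto' (htend a) (fun i => hSmt (r i) (hrS i) a)
      apply h2 (r 0) (hrS 0) l hlnn
      intro a ha
      have hla : (0:ℝ) < l a := ha
      obtain ⟨i, hi⟩ := ((htend a).eventually (eventually_gt_nhds hla)).exists
      have : a ∈ {b | 0 < r i b} := hi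
      rwa [hsupp i 0] at this
  tfae_have 1 → 2 := by
    rintro ⟨hO, hC⟩ r hr t ht hsupp
    have hts0 : ∀ a, r a = 0 → t a = 0 := by
      intro a h
      by_contra hne
      exact (hsupp (lt_of_le_of_ne (ht a) (Ne.symm hne))).ne' h
    -- Step A: some positive combination c₀ * r + t lies in S
    obtain ⟨ε, hε, hball⟩ := hO r hr
    have hts : (0:ℝ) ≤ ∑ a, t a := Finset.sum_nonneg fun a _ => ht a
    set δ : ℝ := ε / (∑ a, t a + 1) with hδdef
    have hδ : 0 < δ := div_pos hε (by linarith)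
    have hmemA : (fun a => r a + δ * t a) ∈ S := by
      apply hball _ (fun a => add_nonneg (hSmt r hr a) (mul_nonneg hδ.le (ht a)))
      · intro a ha
        simp only [Set.mem_setOf_eq] at ha ⊢
        rcases (hSmt r hr a).lt_or_eq with h | h
        · exact h
        · rw [← h, hts0 a h.symm] at ha; simp at ha
      · have habs : ∀ a ∈ Finset.univ, |r a - (r a + δ * t a)| = δ * t a := by
          intro a _
          rw [show r a - (r a + δ * t a) = -(δ * t a) by ring, abs_neg,
            abs_of_nonneg (mul_nonneg hδ.le (ht a))]
        rw [Finset.sum_congr rfl habs, ← Finset.mul_sum]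
        have hone : δ * (∑ a, t a + 1) = ε := by
          rw [hδdef]; field_simp
        nlinarith
    have hc₀pos : (0:ℝ) < 1/δ := by positivity
    have hmemA' : (fun a => (1/δ) * r a + t a) ∈ S := by
      have := (hinv (1/δ) hc₀pos _).mp hmemA
      convert this using 1
      funext a
      field_simp
    -- the set of admissible coefficients
    set T : Set ℝ := {c : ℝ | 0 ≤ c ∧ (fun a => c * r a + t a) ∈ S} with hT
    have hTne : T.Nonempty := ⟨1/δ, hc₀pos.le, hmemA'⟩
    have hTbd : BddBelow T := ⟨0, fun c hc => hc.1⟩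
    suffices h0 : (0:ℝ) ∈ T by
      have := h0.2
      simpa using this
    by_contra h0
    obtain ⟨u, -, hu_tendsto, hu_mem⟩ := exists_seq_tendsto_sInf hTne hTbd
    set c : ℝ := sInf T with hcdef
    have hupos : ∀ n, 0 < u n := by
      intro n
      rcases (hu_mem n).1.lt_or_eq with h | h
      · exact h
      · exact absurd (h ▸ hu_mem n) h0
    have hsuppEq : ∀ n, {a | 0 < u n * r a + t a} = {a | 0 < r a} := by
      intro n
      ext a
      simp only [Set.mem_setOf_eq]
      constructor
      · intro h
        rcases (hSmt r hr a).lt_or_eq with h' | h'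
        · exact h'
        · rw [← h', hts0 a h'.symm] at h; simp at h
      · intro h
        nlinarith [hupos n, ht a]
    have hl : (fun a => c * r a + t a) ∈ S := by
      apply hC (fun n a => u n * r a + t a) _ (fun n => (hu_mem n).2)
        (fun i j => (hsuppEq i).trans (hsuppEq j).symm)
      intro a
      exact (hu_tendsto.mul_const (r a)).add_const (t a)
    have hcnn : 0 ≤ c := le_csInf hTne (fun b hb => hb.1)
    have hcT : c ∈ T := ⟨hcnn, hl⟩
    have hcpos : 0 < c := by
      rcases hcnn.lt_or_eq with h | h
      · exact h
      · exact absurd (h ▸ hcT) h0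
    obtain ⟨ε', hε', hball'⟩ := hO _ hl
    have hrs : (0:ℝ) ≤ ∑ a, r a := Finset.sum_nonneg fun a _ => hSmt r hr a
    set η : ℝ := min (c/2) (ε' / (∑ a, r a + 1)) with hηdef
    have hη : 0 < η := lt_min (half_pos hcpos) (div_pos hε' (by linarith))
    have hηc : η ≤ c/2 := min_le_left _ _
    have hmemB : (fun a => (c - η) * r a + t a) ∈ S := by
      apply hball'
      · intro a
        have : 0 ≤ (c - η) * r a := mul_nonneg (by linarith) (hSmt r hr a)
        linarith [ht a]
      · intro a ha
        simp only [Set.mem_setOf_eq] at ha ⊢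
        rcases (hSmt r hr a).lt_or_eq with h' | h'
        · nlinarith [ht a]
        · rw [← h', hts0 a h'.symm] at ha ⊢
          simpa using ha
      · have habs : ∀ a ∈ Finset.univ,
            |(c * r a + t a) - ((c - η) * r a + t a)| = η * r a := by
          intro a _
          rw [show (c * r a + t a) - ((c - η) * r a + t a) = η * r a by ring,
            abs_of_nonneg (mul_nonneg hη.le (hSmt r hr a))]
        rw [Finset.sum_congr rfl habs, ← Finset.mul_sum]
        have h1 : η ≤ ε' / (∑ a, r a + 1) := min_le_right _ _
        have h2 : η * (∑ a, r a + 1) ≤ ε' :=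
          (le_div_iff₀ (by linarith : (0:ℝ) < ∑ a, r a + 1)).mp h1
        nlinarith
    have hle : c ≤ c - η := csInf_le hTbd ⟨by linarith, hmemB⟩
    linarith
  tfae_finish
end

section
/- Every closed set of real-weighted multiteams whose membership depends only on the support is downwards closed: let α be a finite type and let S be a closed set of real-weighted multiteams over α such that for all r, t with supp(t) = supp(r), r ∈ S implies t ∈ S. Then for every r ∈ S and every real-weighted multiteam t with supp(t) ⊆ supp(r), t ∈ S. -/
/-- Every closed set of real-weighted multiteams whose membership depends only on
the support is downwards closed (with respect to shrinking the support). -/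
theorem multiteamClosed_support_invariant_downwards_closed
    {α : Type*} [Fintype α] (S : Set (α → ℝ))
    (hSmt : ∀ r ∈ S, ∀ a, 0 ≤ r a)
    (hclosed : MultiteamClosed S)
    (hsupp : ∀ r t : α → ℝ, (∀ a, 0 ≤ t a) → {a | 0 < t a} = {a | 0 < r a} →
      r ∈ S → t ∈ S) :
    ∀ r ∈ S, ∀ t : α → ℝ, (∀ a, 0 ≤ t a) → {a | 0 < t a} ⊆ {a | 0 < r a} →
      t ∈ S := by
  intro r hr t ht hts
  set q : ℕ → α → ℝ := fun i a => t a + (1 / (i + 1 : ℝ)) * r a with hq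
  have hrpos : ∀ a, 0 ≤ r a := hSmt r hr
  have hsup : ∀ i, {a | 0 < q i a} = {a | 0 < r a} := by
    intro i
    ext a
    simp only [hq, Set.mem_setOf_eq]
    constructor
    · intro h
      by_contra hra
      have hra0 : r a = 0 := le_antisymm (not_lt.mp hra) (hrpos a)
      have hta0 : t a = 0 := by
        by_contra hta
        exact hra (hts (lt_of_le_of_ne (ht a) (Ne.symm hta)))
      simp [hra0, hta0] at h
    · intro h
      have : 0 < (1 / (i + 1 : ℝ)) * r a := by positivity
      linarith [ht a]
  refine hclosed q t (fun i => hsupp r (q i) ?_ (hsup i) hr)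
    (fun i j => (hsup i).trans (hsup j).symm) ?_
  · intro a
    have : 0 ≤ (1 / (i + 1 : ℝ)) * r a := mul_nonneg (by positivity) (hrpos a)
    simp only [hq]
    linarith [ht a]
  · intro a
    have h1 : Filter.Tendsto (fun i : ℕ => (1 / (i + 1 : ℝ)) * r a)
        Filter.atTop (nhds (0 * r a)) :=
      (tendsto_one_div_add_atTop_nhds_zero_nat).mul_const _
    have := h1.const_add (t a)
    simpa [hq] using this
end

section
/- The strict forking atom is topologically open for real-weighted multiteams: let α be a finite type, f : α → β, g : α → γ (β, γ arbitrary types with decidable equality) and let p be a real number with 0 < p < 1. Then the set S of real-weighted multiteams r over α such that for all a : β and b : γ, if Σ_{s with f s = a ∧ g s = b} r s > 0 then Σ_{s with f s = a ∧ g s = b} r s < p * Σ_{s with f s = a} r s, is open. -/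
/-- The strict forking atom `f ◁<p g` is topologically open for real-weighted
multiteams. -/
theorem strict_forking_atom_open
    {α β γ : Type*} [Fintype α] [DecidableEq β] [DecidableEq γ]
    (f : α → β) (g : α → γ) (p : ℝ) (hp0 : 0 < p) (hp1 : p < 1) :
    MultiteamOpen { r : α → ℝ | (∀ a, 0 ≤ r a) ∧
      ∀ (a : β) (b : γ),
        0 < ∑ s ∈ Finset.univ.filter (fun s => f s = a ∧ g s = b), r s →
        (∑ s ∈ Finset.univ.filter (fun s => f s = a ∧ g s = b), r s) <
          p * ∑ s ∈ Finset.univ.filter (fun s => f s = a), r s } := by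
  classical
  rintro r ⟨hr0, hr⟩
  set δ : β × γ → ℝ := fun ab =>
    (p * ∑ s ∈ Finset.univ.filter (fun s => f s = ab.1), r s
      - ∑ s ∈ Finset.univ.filter (fun s => f s = ab.1 ∧ g s = ab.2), r s) / (p + 1)
    with hδ
  set F : Finset (β × γ) := (Finset.univ.image (fun s => (f s, g s))).filter
    (fun ab => 0 < ∑ s ∈ Finset.univ.filter (fun s => f s = ab.1 ∧ g s = ab.2), r s)
    with hF
  have hne : (insert (1:ℝ) (F.image δ)).Nonempty := ⟨1, Finset.mem_insert_self _ _⟩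
  set ε : ℝ := (insert (1:ℝ) (F.image δ)).min' hne with hε
  have hδpos : ∀ ab ∈ F, 0 < δ ab := by
    intro ab hab
    rw [hF, Finset.mem_filter] at hab
    have := hr ab.1 ab.2 hab.2
    have hp1' : (0:ℝ) < p + 1 := by linarith
    rw [hδ]
    exact div_pos (by linarith) (by linarith)
  have hεpos : 0 < ε := by
    apply (Finset.lt_min'_iff _ hne).mpr
    intro y hy
    rcases Finset.mem_insert.mp hy with h | h
    · simp [h]
    · rcases Finset.mem_image.mp h with ⟨ab, hab, rfl⟩
      exact hδpos ab hab
  refine ⟨ε, hεpos, ?_⟩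
  intro t ht0 hsupp hdist
  refine ⟨ht0, ?_⟩
  intro a b htpos
  -- find a positive witness in the block
  obtain ⟨s, hsmem, hst⟩ := Finset.exists_lt_of_sum_lt (show
    ∑ s ∈ Finset.univ.filter (fun s => f s = a ∧ g s = b), (0:ℝ) <
    ∑ s ∈ Finset.univ.filter (fun s => f s = a ∧ g s = b), t s by simpa using htpos)
  have hrs : 0 < r s := hsupp hst
  have habF : (a, b) ∈ F := by
    rw [hF, Finset.mem_filter]
    constructor
    · apply Finset.mem_image.mpr
      refine ⟨s, Finset.mem_univ s, ?_⟩
      have := (Finset.mem_filter.mp hsmem).2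
      simp [this.1, this.2]
    · exact Finset.sum_pos' (fun i _ => hr0 i) ⟨s, hsmem, hrs⟩
  have hrab := hr a b (Finset.sum_pos' (fun i _ => hr0 i) ⟨s, hsmem, hrs⟩)
  -- the key estimate
  have key : ∀ A : Finset α, |(∑ s ∈ A, r s) - ∑ s ∈ A, t s| ≤ ∑ a, |r a - t a| := by
    intro A
    rw [← Finset.sum_sub_distrib]
    calc |∑ s ∈ A, (r s - t s)| ≤ ∑ s ∈ A, |r s - t s| := Finset.abs_sum_le_sum_abs _ _
      _ ≤ ∑ a, |r a - t a| := Finset.sum_le_sum_of_subset_of_nonneg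
            (Finset.subset_univ A) (fun _ _ _ => abs_nonneg _)
  have hεle : ε ≤ δ (a, b) := Finset.min'_le _ _
    (Finset.mem_insert_of_mem (Finset.mem_image_of_mem δ habF))
  have h1 := key (Finset.univ.filter (fun s => f s = a ∧ g s = b))
  have h2 := key (Finset.univ.filter (fun s => f s = a))
  have h1' := abs_le.mp h1
  have h2' := abs_le.mp h2
  have hδval : δ (a, b) = (p * ∑ s ∈ Finset.univ.filter (fun s => f s = a), r s
      - ∑ s ∈ Finset.univ.filter (fun s => f s = a ∧ g s = b), r s) / (p + 1) := rfl
  have hp1' : (0:ℝ) < p + 1 := by linarith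
  rw [hδval] at hεle
  set E := ∑ a, |r a - t a|
  set Rab := ∑ s ∈ Finset.univ.filter (fun s => f s = a ∧ g s = b), r s
  set Ra := ∑ s ∈ Finset.univ.filter (fun s => f s = a), r s
  set Tab := ∑ s ∈ Finset.univ.filter (fun s => f s = a ∧ g s = b), t s
  set Ta := ∑ s ∈ Finset.univ.filter (fun s => f s = a), t s
  have hE : (p + 1) * E < p * Ra - Rab := by
    have h3 := (le_div_iff₀ hp1').mp hεle
    nlinarith
  nlinarith [h1'.1, h1'.2, h2'.1, h2'.2]
end
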